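/- Let M be a special local Moufang set and let x be a unit such that x·2 := x·α_x is also a unit. Then: (1) there exists a unique y ∈ X with y·2 = x; (2) (xτ)·2 is not equivalent to 0; (3) ((x·2)τ)·2 = xτ, where τ is a fixed μ-map. -/

import Mathlib

open Equiv

structure LocalMoufangSet (X : Type*) where
  r : X → X → Prop
  requiv : Equivalence r
  U : X → Subgroup (Equiv.Perm X)
  preserves : ∀ x : X, ∀ u ∈ U x, ∀ a b : X, r a b ↔ r (u a) (u b)
  big : ∃ a b c : X, ¬ r a b ∧ ¬ r b c ∧ ¬ r a c
  lm1 : ∀ x y : X, r x y → ∀ u ∈ U x, ∃ v ∈ U y, ∀ z : X, r (u z) (v z)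
  lm2_fix : ∀ x : X, ∀ u ∈ U x, u x = x
  lm2_trans : ∀ x y z : X, ¬ r y x → ¬ r z x → ∃! u : Equiv.Perm X, u ∈ U x ∧ u y = z
  lm2'_trans : ∀ x y z : X, ¬ r y x → ¬ r z x → ∃ u ∈ U x, r (u y) z
  lm2'_free : ∀ x : X, ∀ u ∈ U x, ∀ y : X, ¬ r y x → r (u y) y → ∀ z : X, r (u z) z
  lm3 : ∀ x : X, ∀ g ∈ (⨆ y : X, U y : Subgroup (Equiv.Perm X)),
      (U x).map (MulAut.conj g).toMonoidHom = U (g x)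

namespace LocalMoufangSet

variable {X : Type*} (M : LocalMoufangSet X)

/-- The little projective group. -/
def G : Subgroup (Equiv.Perm X) := ⨆ x : X, M.U x

/-- `x` is a unit with respect to the base points `o` (zero) and `ι` (infinity). -/
def IsUnitPt (o ι x : X) : Prop := ¬ M.r x o ∧ ¬ M.r x ι

/-- `μ` is the μ-map of `x`: it lies in the double coset `U_0 α_x U_0` and swaps `o` and `ι`.
(We use the left-action convention: a right product `g α h` corresponds to `h * α * g`.) -/
def IsMuMap (o ι x : X) (μ : Equiv.Perm X) : Prop :=
  μ o = ι ∧ μ ι = o ∧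
    ∃ a ∈ M.U ι, a o = x ∧ ∃ g ∈ M.U o, ∃ h ∈ M.U o, μ = h * a * g

/-- Specialness with respect to a μ-map `τ`: `(-x)τ = -(xτ)` for all units `x`. -/
def Special (o ι : X) (τ : Equiv.Perm X) : Prop :=
  ∀ z : X, IsUnitPt M o ι z → ∀ a ∈ M.U ι, a o = z → ∀ b ∈ M.U ι, b o = τ z →
    τ (a⁻¹ o) = b⁻¹ o

end LocalMoufangSet


/-!
Write `α_x ∈ U_I` and `β_x ∈ U_O` for the root elements with `α_x O = x` and `β_x I = x`,
and `x·2 = α_x x`, `x⋆2 = β_x x` for the two doublings. Speciality of `τ` makes the two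
negatives `α_x⁻¹ O` and `β_x⁻¹ I` of a unit `x` agree; call this `-x`. Then
`σ = α_x⁻¹ β_x α_x⁻¹` exchanges `O` and `I` and sends `x` to `-x`, so it conjugates `α_x`
to `β_x⁻¹`. Evaluating `σ (x·2)` in two ways gives `α_x⁻¹ (x⋆2) = -(x⋆2)`, so `α_x` and
`α_{x⋆2}²` agree at a point and `(x⋆2)·2 = x`; it also shows `x·2 ≁ O ↔ x⋆2 ≁ I`.
Since `τ` exchanges `O` and `I`, it carries `x·2` to `(τx)⋆2`, and all three claims follow,
the half of `x` being `x⋆2`.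
-/

namespace LocalMoufangSet

variable {X : Type*} (M : LocalMoufangSet X) {O I : X}

theorem U_le_G (P : X) : M.U P ≤ M.G := le_iSup M.U P

theorem IsMuMap.mem_G {e : X} {μ : Perm X} (hμ : M.IsMuMap O I e μ) : μ ∈ M.G := by
  obtain ⟨-, -, a, ha, -, g, hg, h, hh, rfl⟩ := hμ
  exact mul_mem (mul_mem (M.U_le_G O hh) (M.U_le_G I ha)) (M.U_le_G O hg)

theorem r_apply_iff_of_mem_G {g : Perm X} (hg : g ∈ M.G) (a b : X) :
    M.r (g a) (g b) ↔ M.r a b := by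
  refine Subgroup.iSup_induction M.U (C := fun g => ∀ a b, M.r (g a) (g b) ↔ M.r a b) hg
    (fun P u hu a b => (M.preserves P u hu a b).symm) (fun _ _ => Iff.rfl) ?_ a b
  intro f h hf hh a b
  exact (hf (h a) (h b)).trans (hh a b)

theorem r_apply_iff_of_mem_U {u : Perm X} (hu : u ∈ M.U I) (y : X) :
    M.r (u y) I ↔ M.r y I := by
  conv_lhs => rw [← M.lm2_fix I u hu]
  exact (M.preserves I u hu y I).symm

theorem conj_mem_U {g u : Perm X} {P : X} (hg : g ∈ M.G) (hu : u ∈ M.U P) :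
    g * u * g⁻¹ ∈ M.U (g P) :=
  M.lm3 P g hg ▸ Subgroup.mem_map_of_mem _ hu

theorem eq_of_mem_U_of_apply_eq {y : X} (hy : ¬ M.r y I) {u v : Perm X}
    (hu : u ∈ M.U I) (hv : v ∈ M.U I) (h : u y = v y) : u = v :=
  (M.lm2_trans I y (u y) hy ((M.r_apply_iff_of_mem_U hu y).not.2 hy)).unique
    ⟨hu, rfl⟩ ⟨hv, h.symm⟩

theorem isUnitPt_apply_iff_of_swap {θ : Perm X} (hθ : θ ∈ M.G) (hθO : θ O = I) (hθI : θ I = O)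
    (z : X) : M.IsUnitPt O I (θ z) ↔ M.IsUnitPt O I z := by
  have hO : M.r (θ z) O ↔ M.r z I := by rw [← hθI, M.r_apply_iff_of_mem_G hθ]
  have hI : M.r (θ z) I ↔ M.r z O := by rw [← hθO, M.r_apply_iff_of_mem_G hθ]
  rw [IsUnitPt, IsUnitPt, hO, hI, and_comm]

/-- `alpha O I z`, `neg O I z` and `two O I z` are the paper's `α_z`, `-z` and `z·2`, with `O`
and `I` in the roles of `0` and `∞`; exchanging `O` and `I` gives the same objects for the
opposite root group `U_O`. -/
noncomputable def alpha (O I z : X) : Perm X :=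
  Classical.epsilon fun u => u ∈ M.U I ∧ u O = z

noncomputable def neg (O I z : X) : X := (M.alpha O I z)⁻¹ O

noncomputable def two (O I z : X) : X := M.alpha O I z z

theorem alpha_spec {z : X} (hOI : ¬ M.r O I) (hz : ¬ M.r z I) :
    M.alpha O I z ∈ M.U I ∧ M.alpha O I z O = z :=
  Classical.epsilon_spec (M.lm2_trans I O z hOI hz).exists

theorem alpha_mem {z : X} (hOI : ¬ M.r O I) (hz : ¬ M.r z I) : M.alpha O I z ∈ M.U I :=
  (M.alpha_spec hOI hz).1

theorem alpha_apply {z : X} (hOI : ¬ M.r O I) (hz : ¬ M.r z I) : M.alpha O I z O = z :=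
  (M.alpha_spec hOI hz).2

theorem eq_alpha (hOI : ¬ M.r O I) {u : Perm X} (hu : u ∈ M.U I) :
    u = M.alpha O I (u O) :=
  have hz := (M.r_apply_iff_of_mem_U hu O).not.2 hOI
  M.eq_of_mem_U_of_apply_eq hOI hu (M.alpha_mem hOI hz) (M.alpha_apply hOI hz).symm

theorem conj_alpha (hOI : ¬ M.r O I) {z : X} (hz : ¬ M.r z I) {g : Perm X} (hg : g ∈ M.G) :
    g * M.alpha O I z * g⁻¹ = M.alpha (g O) (g I) (g z) := by
  have hOI' : ¬ M.r (g O) (g I) := (M.r_apply_iff_of_mem_G hg O I).not.2 hOI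
  rw [M.eq_alpha hOI' (M.conj_mem_U hg (M.alpha_mem hOI hz))]
  simp [M.alpha_apply hOI hz]

theorem not_r_two (hOI : ¬ M.r O I) {z : X} (hz : ¬ M.r z I) : ¬ M.r (M.two O I z) I :=
  (M.r_apply_iff_of_mem_U (M.alpha_mem hOI hz) z).not.2 hz

theorem alpha_two (hOI : ¬ M.r O I) {z : X} (hz : ¬ M.r z I) :
    M.alpha O I (M.two O I z) = M.alpha O I z * M.alpha O I z := by
  have hα := M.alpha_mem hOI hz
  have h := M.eq_alpha hOI (mul_mem hα hα)
  rw [Perm.mul_apply, M.alpha_apply hOI hz] at h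
  exact h.symm

theorem two_apply_of_swap (hOI : ¬ M.r O I) {θ : Perm X} (hθ : θ ∈ M.G) (hθO : θ O = I)
    (hθI : θ I = O) {z : X} (hz : ¬ M.r z I) : M.two I O (θ z) = θ (M.two O I z) := by
  have h := M.conj_alpha hOI hz hθ
  rw [hθO, hθI] at h
  simp [two, ← h]

/-- The paper's `∼x = -x`: negatives computed in `U_O` and in `U_I` agree. -/
def NegAgree (O I : X) : Prop := ∀ z, M.IsUnitPt O I z → M.neg I O z = M.neg O I z

variable {M} in
theorem NegAgree.symm (h : M.NegAgree O I) : M.NegAgree I O :=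
  fun z hz => (h z ⟨hz.2, hz.1⟩).symm

theorem negAgree_of_special (hOI : ¬ M.r O I) {τ : Perm X} (hτ : τ ∈ M.G) (hτO : τ O = I)
    (hτI : τ I = O) (hsp : M.Special O I τ) : M.NegAgree O I := by
  intro u hu
  obtain ⟨z, rfl⟩ : ∃ z, τ z = u := ⟨τ⁻¹ u, τ.apply_symm_apply u⟩
  have hz := (M.isUnitPt_apply_iff_of_swap hτ hτO hτI z).1 hu
  have hconj := M.conj_alpha hOI hz.2 hτ
  rw [hτO, hτI] at hconj
  have hsp' := hsp z hz _ (M.alpha_mem hOI hz.2) (M.alpha_apply hOI hz.2) _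
    (M.alpha_mem hOI hu.2) (M.alpha_apply hOI hu.2)
  have hτI' : τ⁻¹ I = O := Perm.inv_eq_iff_eq.2 hτO.symm
  rw [neg, neg, ← hconj, ← hsp']
  simp only [mul_inv_rev, inv_inv, Perm.mul_apply, hτI']

theorem exists_swap (hOI : ¬ M.r O I) (hneg : M.NegAgree O I) {x : X} (hx : M.IsUnitPt O I x) :
    ∃ σ ∈ M.G, σ O = I ∧ σ I = O ∧ σ x = M.neg O I x ∧
      σ (M.two O I x) = (M.alpha O I x)⁻¹ (M.two I O x) := by
  have hIO : ¬ M.r I O := mt M.requiv.symm hOI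
  have hα := M.alpha_mem hOI hx.2
  have hβ := M.alpha_mem hIO hx.1
  have hαI : (M.alpha O I x)⁻¹ I = I := Perm.inv_eq_iff_eq.2 (M.lm2_fix I _ hα).symm
  have hαx : (M.alpha O I x)⁻¹ x = O := Perm.inv_eq_iff_eq.2 (M.alpha_apply hOI hx.2).symm
  refine ⟨(M.alpha O I x)⁻¹ * M.alpha I O x * (M.alpha O I x)⁻¹,
    mul_mem (mul_mem (inv_mem (M.U_le_G I hα)) (M.U_le_G O hβ)) (inv_mem (M.U_le_G I hα)),
    ?_, ?_, ?_, ?_⟩ <;> simp only [Perm.mul_apply]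
  · have hnegx : (M.alpha O I x)⁻¹ O = (M.alpha I O x)⁻¹ I := (hneg x hx).symm
    rw [hnegx]
    simpa using hαI
  · rw [hαI, M.alpha_apply hIO hx.1, hαx]
  · rw [hαx, M.lm2_fix O _ hβ]
    rfl
  · simp [two]

theorem conj_alpha_of_swap (hOI : ¬ M.r O I) (hneg : M.NegAgree O I) {x : X}
    (hx : M.IsUnitPt O I x) {σ : Perm X} (hσ : σ ∈ M.G) (hσO : σ O = I) (hσI : σ I = O)
    (hσx : σ x = M.neg O I x) : σ * M.alpha O I x * σ⁻¹ = (M.alpha I O x)⁻¹ := by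
  have hIO : ¬ M.r I O := mt M.requiv.symm hOI
  rw [M.conj_alpha hOI hx.2 hσ, hσO, hσI, hσx, ← hneg x hx]
  exact (M.eq_alpha hIO (inv_mem (M.alpha_mem hIO hx.1))).symm

theorem inv_alpha_apply_two_swap (hOI : ¬ M.r O I) (hneg : M.NegAgree O I) {x : X}
    (hx : M.IsUnitPt O I x) :
    (M.alpha O I x)⁻¹ (M.two I O x) = M.neg I O (M.two I O x) := by
  have hIO : ¬ M.r I O := mt M.requiv.symm hOI
  obtain ⟨σ, hσ, hσO, hσI, hσx, hσ2⟩ := M.exists_swap hOI hneg hx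
  have hconj := M.conj_alpha_of_swap hOI hneg hx hσ hσO hσI hσx
  calc (M.alpha O I x)⁻¹ (M.two I O x)
      = (σ * M.alpha O I x * σ⁻¹) (σ x) := by rw [← hσ2]; simp [two]
    _ = (M.alpha I O x)⁻¹ ((M.alpha I O x)⁻¹ I) := by rw [hconj, hσx, ← hneg x hx]; rfl
    _ = M.neg I O (M.two I O x) := by rw [neg, M.alpha_two hIO hx.1, mul_inv_rev]; rfl

theorem r_two_iff_r_two_swap (hOI : ¬ M.r O I) (hneg : M.NegAgree O I) {x : X}
    (hx : M.IsUnitPt O I x) :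
    M.r (M.two O I x) O ↔ M.r (M.two I O x) I := by
  obtain ⟨σ, hσ, hσO, -, -, hσ2⟩ := M.exists_swap hOI hneg hx
  rw [← M.r_apply_iff_of_mem_G hσ, hσ2, hσO,
    M.r_apply_iff_of_mem_U (inv_mem (M.alpha_mem hOI hx.2))]

theorem two_two_swap (hOI : ¬ M.r O I) (hneg : M.NegAgree O I) {u : X} (hu : M.IsUnitPt O I u)
    (hv : ¬ M.r (M.two I O u) I) : M.two O I (M.two I O u) = u := by
  set v := M.two I O u
  have hIO : ¬ M.r I O := mt M.requiv.symm hOI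
  have hv' : M.IsUnitPt O I v := ⟨M.not_r_two hIO hu.1, hv⟩
  have hαv := M.alpha_mem hOI hv
  have hkey : (M.alpha O I u)⁻¹ v = (M.alpha O I v)⁻¹ O :=
    (M.inv_alpha_apply_two_swap hOI hneg hu).trans (hneg v hv')
  have hα : M.alpha O I u = M.alpha O I (M.two O I v) := by
    rw [M.alpha_two hOI hv]
    refine M.eq_of_mem_U_of_apply_eq ((M.r_apply_iff_of_mem_U (inv_mem hαv) O).not.2 hOI)
      (M.alpha_mem hOI hu.2) (mul_mem hαv hαv) ?_
    rw [← Perm.inv_eq_iff_eq.1 hkey]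
    simp [M.alpha_apply hOI hv]
  rw [← M.alpha_apply hOI (M.not_r_two hOI hv), ← hα, M.alpha_apply hOI hu.2]

end LocalMoufangSet

theorem stmt17_general {X : Type*} (M : LocalMoufangSet X) (o ι : X) (h0 : ¬ M.r o ι)
    (e : X) (τ : Equiv.Perm X) (hτ : M.IsMuMap o ι e τ)
    (hsp : M.Special o ι τ)
    (x : X) (hx : M.IsUnitPt o ι x)
    (α : Equiv.Perm X) (hαU : α ∈ M.U ι) (hαo : α o = x)
    (h2 : M.IsUnitPt o ι (α x)) :
    -- (1) there is a unique y with y·2 = x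
    (∃! y : X, ¬ M.r y ι ∧ ∃ b ∈ M.U ι, b o = y ∧ b y = x) ∧
    -- (2) (xτ)·2 ≁ 0
    (∀ c ∈ M.U ι, c o = τ x → ¬ M.r (c (τ x)) o) ∧
    -- (3) ((x·2)τ)·2 = xτ
    (∀ d ∈ M.U ι, d o = τ (α x) → d (τ (α x)) = τ x) := by
  have hτG := hτ.mem_G
  obtain ⟨hτo, hτι, -⟩ := hτ
  have hneg := M.negAgree_of_special h0 hτG hτo hτι hsp
  have hτx := (M.isUnitPt_apply_iff_of_swap hτG hτo hτι x).2 hx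
  have hx2 : α x = M.two o ι x := by rw [M.eq_alpha h0 hαU, hαo]; rfl
  have hτx2 : τ (α x) = M.two ι o (τ x) := by rw [hx2, M.two_apply_of_swap h0 hτG hτo hτι hx.2]
  have hτx2ι : ¬ M.r (M.two ι o (τ x)) ι := by
    rw [← hτx2, ← hτo, M.r_apply_iff_of_mem_G hτG]; exact h2.1
  refine ⟨?_, fun c hc hco => ?_, fun d hd hdo => ?_⟩
  · have hy : ¬ M.r (M.two ι o x) ι := by
      rw [← M.r_two_iff_r_two_swap h0 hneg hx, ← hx2]; exact h2.1
    refine ⟨M.two ι o x, ⟨hy, _, M.alpha_mem h0 hy, M.alpha_apply h0 hy,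
      M.two_two_swap h0 hneg hx hy⟩, ?_⟩
    rintro _ ⟨hyι, b, hb, rfl, rfl⟩
    have hyo : ¬ M.r (b o) o := fun h =>
      hx.1 (M.requiv.trans ((M.preserves ι b hb _ _).1 h) h)
    have hb2 : b (b o) = M.two o ι (b o) := congrArg (· (b o)) (M.eq_alpha h0 hb)
    rw [hb2] at hx ⊢
    exact (M.two_two_swap (mt M.requiv.symm h0) hneg.symm ⟨hyι, hyo⟩ hx.1).symm
  · rw [M.eq_alpha h0 hc, hco]
    exact (M.r_two_iff_r_two_swap h0 hneg hτx).not.2 hτx2ι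
  · rw [M.eq_alpha h0 hd, hdo, hτx2]
    exact M.two_two_swap h0 hneg hτx hτx2ι

/-- 2-divisibility facts in a special local Moufang set, for a
unit `x` such that `x·2 = x·α_x = α x` is also a unit.  Here `y·2 = b y` for the
α-map `b` of `y`. -/
theorem stmt17 {X : Type*} (M : LocalMoufangSet X) (o ι : X) (h0 : ¬ M.r o ι)
    (e : X) (he : M.IsUnitPt o ι e)
    (τ : Equiv.Perm X) (hτ : M.IsMuMap o ι e τ)
    (hsp : M.Special o ι τ)
    (x : X) (hx : M.IsUnitPt o ι x)
    (α : Equiv.Perm X) (hαU : α ∈ M.U ι) (hαo : α o = x)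
    (h2 : M.IsUnitPt o ι (α x)) :
    -- (1) there is a unique y with y·2 = x
    (∃! y : X, ¬ M.r y ι ∧ ∃ b ∈ M.U ι, b o = y ∧ b y = x) ∧
    -- (2) (xτ)·2 ≁ 0
    (∀ c ∈ M.U ι, c o = τ x → ¬ M.r (c (τ x)) o) ∧
    -- (3) ((x·2)τ)·2 = xτ
    (∀ d ∈ M.U ι, d o = τ (α x) → d (τ (α x)) = τ x) :=
  stmt17_general M o ι h0 e τ hτ hsp x hx α hαU hαo h2
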